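/- arXiv:0902.2137 — 9 statements merged into one kernel-verified Lean document; each statement's English description precedes it below -/
import Mathlib

section
/- If forward simulation holds (Bs ⊆ Bc), the compiled program is deterministic (Bc contains at most one element), and the source program has at least one observable behavior (Bs is nonempty), then backward simulation holds (Bc ⊆ Bs). -/
/-- Forward simulation plus determinism of the compiled program (and nonemptiness of
the source behaviors) implies backward simulation. -/
theorem forward_implies_backward {β : Type*} (Wrong : Set β) (Bs Bc : Set β)
    (hfwd : Bs ⊆ Bc) (hdet : Bc.Subsingleton) (hne : Bs.Nonempty) :
    Bc ⊆ Bs := by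
  obtain ⟨b, hb⟩ := hne
  intro c hc
  rwa [hdet hc (hfwd hb)]
end

section
/- If forward simulation for safe programs holds (Bs \ Wrong ⊆ Bc), the compiled program is deterministic (Bc contains at most one element), and the source program has at least one observable behavior (Bs is nonempty), then backward simulation for safe programs holds: if Bs ∩ Wrong = ∅ then Bc ⊆ Bs. -/
/-- Forward simulation for safe programs plus determinism of the compiled program
(and nonemptiness of the source behaviors) implies backward simulation for safe
programs. -/
theorem safe_forward_implies_safe_backward {β : Type*} (Wrong : Set β) (Bs Bc : Set β)
    (hfwd : Bs \ Wrong ⊆ Bc) (hdet : Bc.Subsingleton) (hne : Bs.Nonempty) :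
    Bs ∩ Wrong = ∅ → Bc ⊆ Bs := by
  intro hsafe c hc
  obtain ⟨s, hs⟩ := hne
  have hsw : s ∉ Wrong := fun hw =>
    Set.eq_empty_iff_forall_notMem.mp hsafe s ⟨hs, hw⟩
  have : s ∈ Bc := hfwd ⟨hs, hsw⟩
  rwa [hdet hc this]
end

section
/- If backward simulation holds (Bc ⊆ Bs), the source program is deterministic (Bs contains at most one element), and the compiled program has at least one observable behavior (Bc is nonempty), then forward simulation holds (Bs ⊆ Bc). -/
/-- Backward simulation plus determinism of the source program (and nonemptiness of
the compiled program's behaviors) implies forward simulation. -/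
theorem backward_implies_forward {β : Type*} (Wrong : Set β) (Bs Bc : Set β)
    (hbwd : Bc ⊆ Bs) (hdet : Bs.Subsingleton) (hne : Bc.Nonempty) :
    Bs ⊆ Bc := by
  obtain ⟨c, hc⟩ := hne
  intro b hb
  rwa [hdet hb (hbwd hc)]
end

section
/- If backward simulation for safe programs holds (if Bs ∩ Wrong = ∅ then Bc ⊆ Bs), the source program is deterministic (Bs contains at most one element), and the compiled program has at least one observable behavior (Bc is nonempty), then forward simulation for safe programs holds: Bs \ Wrong ⊆ Bc. -/
/-- Backward simulation for safe programs plus determinism of the source program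
(and nonemptiness of the compiled program's behaviors) implies forward simulation
for safe programs. -/
theorem safe_backward_implies_safe_forward {β : Type*} (Wrong : Set β) (Bs Bc : Set β)
    (hbwd : Bs ∩ Wrong = ∅ → Bc ⊆ Bs) (hdet : Bs.Subsingleton) (hne : Bc.Nonempty) :
    Bs \ Wrong ⊆ Bc := by
  intro b hb
  have hsafe : Bs ∩ Wrong = ∅ := by
    ext x
    simp only [Set.mem_inter_iff, Set.mem_empty_iff_false, iff_false, not_and]
    intro hx hw
    exact hb.2 (hdet hb.1 hx ▸ hw)
  obtain ⟨c, hc⟩ := hne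
  have := hbwd hsafe hc
  rwa [hdet hb.1 this]
end

section
/- If forward simulation for safe programs holds (Bs \ Wrong ⊆ Bc), the compiled program is deterministic (Bc contains at most one element), and the source program has at least one observable behavior (Bs is nonempty), then every specification is preserved: for every set Spec of behaviors with Spec ∩ Wrong = ∅, if Bs ⊆ Spec then Bc ⊆ Spec. -/
/-- Forward simulation for safe programs plus determinism of the compiled program
(and nonemptiness of the source behaviors) implies preservation of every
specification. -/
theorem safe_forward_implies_spec_preservation {β : Type*} (Wrong : Set β)
    (Bs Bc : Set β)
    (hfwd : Bs \ Wrong ⊆ Bc) (hdet : Bc.Subsingleton) (hne : Bs.Nonempty) :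
    ∀ Spec : Set β, Spec ∩ Wrong = ∅ → Bs ⊆ Spec → Bc ⊆ Spec := by
  intro Spec hdisj hsub
  obtain ⟨b, hb⟩ := hne
  have hbS : b ∈ Spec := hsub hb
  have hbW : b ∉ Wrong := fun h =>
    Set.eq_empty_iff_forall_notMem.mp hdisj b ⟨hbS, h⟩
  have hbC : b ∈ Bc := hfwd ⟨hb, hbW⟩
  intro c hc
  rwa [hdet hc hbC]
end

section
/- Let step₁ and step₂ be labeled transition systems over state types σ₁ and σ₂ with the same event type ν, with closures star₂ and plus₂, sim : σ₁ → σ₂ → Prop, m : σ₁ → M a measure into a type M carrying a well-founded relation ≺. Assume the star simulation hypothesis: if sim S₁ S₂ and step₁ S₁ t S₁' then either there exists S₂' with plus₂ S₂ t S₂' and sim S₁' S₂', or m S₁' ≺ m S₁ and there exists S₂' with star₂ S₂ t S₂' and sim S₁' S₂'. Then there is no infinite stuttering: if (f, τ) is an infinite execution of step₁ from f 0 and sim (f 0) S₂, then there exists an infinite execution of step₂ from S₂, i.e. a function g : ℕ → σ₂ with g 0 = S₂ such that for every n there is a trace t with step₂ (g n) t (g (n+1)). -/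
/-- Reflexive-transitive closure of a labeled transition system, concatenating traces. -/
inductive LTSStar {σ ν : Type*} (step : σ → List ν → σ → Prop) : σ → List ν → σ → Prop
  | refl (s : σ) : LTSStar step s [] s
  | step {s s' s'' : σ} {t t' : List ν} :
      step s t s' → LTSStar step s' t' s'' → LTSStar step s (t ++ t') s''

/-- Transitive closure (at least one step) of a labeled transition system. -/
inductive LTSPlus {σ ν : Type*} (step : σ → List ν → σ → Prop) : σ → List ν → σ → Prop
  | step {s s' s'' : σ} {t t' : List ν} :
      step s t s' → LTSStar step s' t' s'' → LTSPlus step s (t ++ t') s''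

lemma LTSPlus.toStar {σ ν : Type*} {step : σ → List ν → σ → Prop} {s s' : σ} {t : List ν}
    (h : LTSPlus step s t s') : LTSStar step s t s' := by
  rcases h with ⟨h1, h2⟩
  exact LTSStar.step h1 h2

lemma LTSStar.transPlus {σ ν : Type*} {step : σ → List ν → σ → Prop} {s s' s'' : σ}
    {t t' : List ν} (h : LTSStar step s t s') (h' : LTSPlus step s' t' s'') :
    ∃ u, LTSPlus step s u s'' := by
  induction h with
  | refl => exact ⟨t', h'⟩
  | step h1 _ ih =>
    rcases ih h' with ⟨u, hu⟩
    exact ⟨_, LTSPlus.step h1 hu.toStar⟩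

/-- A "star" simulation with a well-founded measure rules out infinite stuttering:
infinite executions of the source give rise to infinite executions of the target. -/
theorem star_simulation_no_stuttering {σ₁ σ₂ ν M : Type*}
    (step₁ : σ₁ → List ν → σ₁ → Prop) (step₂ : σ₂ → List ν → σ₂ → Prop)
    (sim : σ₁ → σ₂ → Prop)
    (m : σ₁ → M) (r : M → M → Prop) (hwf : WellFounded r)
    (hsim : ∀ S₁ S₂ t S₁', sim S₁ S₂ → step₁ S₁ t S₁' →
      (∃ S₂', LTSPlus step₂ S₂ t S₂' ∧ sim S₁' S₂') ∨
      (r (m S₁') (m S₁) ∧ ∃ S₂', LTSStar step₂ S₂ t S₂' ∧ sim S₁' S₂'))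
    (f : ℕ → σ₁) (τ : ℕ → List ν)
    (hexec : ∀ n, step₁ (f n) (τ n) (f (n + 1)))
    (S₂ : σ₂) (h₀ : sim (f 0) S₂) :
    ∃ g : ℕ → σ₂, g 0 = S₂ ∧ ∀ n, ∃ t, step₂ (g n) t (g (n + 1)) := by
  classical
  -- Key lemma: from any state simulating some f n, we can reach (in ≥1 steps)
  -- a state simulating some later f k.
  have key : ∀ x : M, ∀ n (S : σ₂), m (f n) = x → sim (f n) S →
      ∃ S' t k, LTSPlus step₂ S t S' ∧ sim (f k) S' := by
    intro x
    induction x using WellFounded.induction hwf with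
    | _ x ih =>
      intro n S hx hS
      rcases hsim _ _ _ _ hS (hexec n) with ⟨S', hp, hs⟩ | ⟨hr, S', hst, hs⟩
      · exact ⟨S', _, n + 1, hp, hs⟩
      · rcases ih (m (f (n + 1))) (hx ▸ hr) (n + 1) S' rfl hs with ⟨S'', t, k, hp, hs'⟩
        rcases hst.transPlus hp with ⟨u, hu⟩
        exact ⟨S'', u, k, hu, hs'⟩
  -- "Good" states: those that can reach (in ≥0 steps) a state simulating some f n.
  set Good : σ₂ → Prop := fun S => ∃ n S' t, LTSStar step₂ S t S' ∧ sim (f n) S' with hGood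
  have stepGood : ∀ S, Good S → ∃ S'', (∃ u, step₂ S u S'') ∧ Good S'' := by
    rintro S ⟨n, S', t, hst, hs⟩
    cases hst with
    | refl =>
      rcases key (m (f n)) n S rfl hs with ⟨S'', t', k, hp, hs'⟩
      rcases hp with ⟨h1, h2⟩
      exact ⟨_, ⟨_, h1⟩, k, S'', _, h2, hs'⟩
    | step h1 h2 =>
      exact ⟨_, ⟨_, h1⟩, n, S', _, h2, hs⟩
  let next : {s : σ₂ // Good s} → {s : σ₂ // Good s} := fun p =>
    ⟨(stepGood p.1 p.2).choose, (stepGood p.1 p.2).choose_spec.2⟩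
  have good₀ : Good S₂ := ⟨0, S₂, [], LTSStar.refl S₂, h₀⟩
  let G : ℕ → {s : σ₂ // Good s} := fun n => next^[n] ⟨S₂, good₀⟩
  refine ⟨fun n => (G n).1, rfl, fun n => ?_⟩
  have hGn : G (n + 1) = next (G n) := Function.iterate_succ_apply' next n _
  show ∃ t, step₂ (G n).1 t (G (n + 1)).1
  rw [hGn]
  exact (stepGood (G n).1 (G n).2).choose_spec.1
end

section
/- Let step₁ and step₂ be labeled transition systems over state types σ₁ and σ₂ with the same event type ν, with closure plus₂ (at least one step), and sim : σ₁ → σ₂ → Prop. Assume the 'plus' simulation hypothesis: if sim S₁ S₂ and step₁ S₁ t S₁' then there exists S₂' with plus₂ S₂ t S₂' and sim S₁' S₂'. Then infinite executions are preserved: if (f, τ) is an infinite execution of step₁ from f 0 and sim (f 0) S₂, then there exists an infinite execution of step₂ from S₂, i.e. a function g : ℕ → σ₂ with g 0 = S₂ such that for every n there is a trace t with step₂ (g n) t (g (n+1)). -/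
/-- A "plus" simulation preserves infinite executions. -/
theorem plus_simulation_preserves_divergence {σ₁ σ₂ ν : Type*}
    (step₁ : σ₁ → List ν → σ₁ → Prop) (step₂ : σ₂ → List ν → σ₂ → Prop)
    (sim : σ₁ → σ₂ → Prop)
    (hsim : ∀ S₁ S₂ t S₁', sim S₁ S₂ → step₁ S₁ t S₁' →
      ∃ S₂', LTSPlus step₂ S₂ t S₂' ∧ sim S₁' S₂')
    (f : ℕ → σ₁) (τ : ℕ → List ν)
    (hexec : ∀ n, step₁ (f n) (τ n) (f (n + 1)))
    (S₂ : σ₂) (h₀ : sim (f 0) S₂) :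
    ∃ g : ℕ → σ₂, g 0 = S₂ ∧ ∀ n, ∃ t, step₂ (g n) t (g (n + 1)) := by
  classical
  have plus_destruct : ∀ {s s'' : σ₂} {t : List ν}, LTSPlus step₂ s t s'' →
      ∃ s' t₁ t₂, step₂ s t₁ s' ∧ LTSStar step₂ s' t₂ s'' := by
    rintro s s'' t ⟨h1, h2⟩
    exact ⟨_, _, _, h1, h2⟩
  set Inv : ℕ × σ₂ → Prop := fun p => ∃ S' ts, LTSStar step₂ p.2 ts S' ∧ sim (f p.1) S' with hInv
  have key : ∀ p : ℕ × σ₂, Inv p → ∃ q : ℕ × σ₂, (∃ t, step₂ p.2 t q.2) ∧ Inv q := by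
    rintro ⟨n, S⟩ ⟨S', ts, hstar, hs⟩
    cases hstar with
    | refl =>
      obtain ⟨S₂', hplus, hsim'⟩ := hsim (f n) S (τ n) (f (n+1)) hs (hexec n)
      obtain ⟨s', t₁, t₂, h1, h2⟩ := plus_destruct hplus
      exact ⟨(n+1, s'), ⟨_, h1⟩, S₂', _, h2, hsim'⟩
    | step h1 h2 => exact ⟨(n, _), ⟨_, h1⟩, S', _, h2, hs⟩
  have inv0 : Inv (0, S₂) := ⟨S₂, [], LTSStar.refl S₂, h₀⟩
  let F : {p // Inv p} → {p // Inv p} :=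
    fun p => ⟨(key p.1 p.2).choose, (key p.1 p.2).choose_spec.2⟩
  let G : ℕ → {p // Inv p} := fun n => F^[n] ⟨(0, S₂), inv0⟩
  refine ⟨fun n => (G n).1.2, rfl, fun n => ?_⟩
  have hG : G (n+1) = F (G n) := Function.iterate_succ_apply' F n _
  show ∃ t, step₂ (G n).1.2 t (G (n+1)).1.2
  rw [hG]
  exact (key (G n).1 (G n).2).choose_spec.1
end

section
/- For all 32-bit bit vectors x, m₁, m₂ : BitVec 32 and all natural numbers n₁, n₂, rotating then masking twice composes as a single rotate-and-mask: ((x.rotateLeft n₁ &&& m₁).rotateLeft n₂) &&& m₂ = x.rotateLeft (n₁ + n₂) &&& (m₁.rotateLeft n₂ &&& m₂). (This is the algebraic identity justifying the composition of two PowerPC rotate-and-mask instructions rolm into one.) -/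
lemma rot_get (x : BitVec 32) (n i : ℕ) (h : i < 32) :
    (x.rotateLeft n).getLsbD i = x.getLsbD ((i + 32 - n % 32) % 32) := by
  rw [BitVec.getLsbD_rotateLeft]
  have hn : n % 32 < 32 := Nat.mod_lt _ (by norm_num)
  rcases Nat.lt_or_ge i (n % 32) with h' | h'
  · have e : (i + 32 - n % 32) % 32 = 32 - n % 32 + i := by omega
    simp [h', e]
  · have e : (i + 32 - n % 32) % 32 = i - n % 32 := by omega
    simp [Nat.not_lt.2 h', e, h]

/-- Composing two rotate-and-mask operations yields a single rotate-and-mask: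
`rolm n₂ m₂ ∘ rolm n₁ m₁ = rolm (n₁ + n₂) (rol m₁ n₂ &&& m₂)`. -/
theorem rolm_rolm (x m₁ m₂ : BitVec 32) (n₁ n₂ : ℕ) :
    ((x.rotateLeft n₁ &&& m₁).rotateLeft n₂) &&& m₂ =
      x.rotateLeft (n₁ + n₂) &&& (m₁.rotateLeft n₂ &&& m₂) := by
  apply BitVec.eq_of_getLsbD_eq
  intro i
  intro hi
  have hj : ((i : ℕ) + 32 - n₂ % 32) % 32 < 32 := Nat.mod_lt _ (by norm_num)
  rw [BitVec.getLsbD_and, BitVec.getLsbD_and, BitVec.getLsbD_and,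
    rot_get _ _ _ hi, rot_get _ _ _ hi, rot_get _ _ _ hi,
    BitVec.getLsbD_and, rot_get _ _ _ hj]
  have e : (((i:ℕ) + 32 - n₂ % 32) % 32 + 32 - n₁ % 32) % 32
       = ((i:ℕ) + 32 - (n₁ + n₂) % 32) % 32 := by omega
  rw [e, Bool.and_assoc]
end

section
/- For every 32-bit bit vector x : BitVec 32 and every natural number n < 32, a logical right shift equals a rotate-and-mask: x >>> n = x.rotateLeft (32 - n) &&& (BitVec.allOnes 32 >>> n). (This is the identity justifying the translation of shru into the PowerPC rotate-and-mask instruction rolm.) -/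
/-- A logical right shift is a rotate-and-mask:
`shru x n = rolm (32 - n) ((-1) >>> n) x`. -/
theorem shru_eq_rolm (x : BitVec 32) (n : ℕ) (hn : n < 32) :
    x >>> n = x.rotateLeft (32 - n) &&& (BitVec.allOnes 32 >>> n) := by
  have hall : ∀ k, (4294967295#32).getLsbD k = decide (k < 32) := by
    intro k
    rw [show (4294967295#32) = BitVec.allOnes 32 from rfl, BitVec.getLsbD_allOnes]
  ext i
  simp [BitVec.getElem_rotateLeft, hall]
  rcases Nat.eq_zero_or_pos n with h | h
  · subst h; simp_all [BitVec.getLsbD_eq_getElem]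
  · have h32 : (32 - n) % 32 = 32 - n := Nat.mod_eq_of_lt (by omega)
    simp only [h32]
    by_cases hi : (i : ℕ) < 32 - n
    · simp [hi, show 32 - (32 - n) + (i:ℕ) = n + i by omega, show n + (i:ℕ) < 32 by omega, BitVec.getLsbD_eq_getElem]
    · simp [hi, BitVec.getLsbD_of_ge x (n + i) (by omega), show ¬ (n + (i:ℕ) < 32) by omega]
end
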